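/- arXiv:2305.13165 — 2 statements merged into one kernel-verified Lean document; each statement's English description precedes it below -/
import Mathlib

section
/- Let $L \ge 2$ be an integer and $s_1 \ge s_2 \ge 0$. The minimum of $\|H\|_{S_{2/L}}^{2/L}$ over matrices $H \in \mathbb{R}^{d\times 2}$ ($d \ge 2$) such that the singular values of $\sigma(H)$ are $\{s_1, s_2\}$ equals $(s_1 + s_2)^{2/L}$, where $\sigma$ is the entrywise ReLU and $\|H\|_{S_p}^p = \sum_i s_i(H)^p$ is the $p$-Schatten pseudo-norm raised to the $p$-th power. -/
open Matrix BigOperators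

noncomputable def frobSq {m n : ℕ} (A : Matrix (Fin m) (Fin n) ℝ) : ℝ :=
  ∑ i, ∑ j, (A i j)^2

noncomputable def singVals {m n : ℕ} (A : Matrix (Fin m) (Fin n) ℝ) : Fin n → ℝ :=
  fun i => Real.sqrt ((Matrix.posSemidef_conjTranspose_mul_self A).isHermitian.eigenvalues i)

noncomputable def nuclearNorm {m n : ℕ} (A : Matrix (Fin m) (Fin n) ℝ) : ℝ :=
  ∑ i, singVals A i

noncomputable def relu : ℝ → ℝ := fun t => max t 0


noncomputable def schattenPow {d : ℕ} (p : ℝ) (H : Matrix (Fin d) (Fin 2) ℝ) : ℝ :=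
  ∑ i, (singVals H i) ^ p

/-!
For `H` with columns `u, v`, the squared nuclear norm is `‖u‖² + ‖v‖² + 2√(gramDet u v)`. Passing
to positive parts removes `‖u⁻‖² + ‖v⁻‖²` from the first two terms and adds at most as much to the
area term, so `‖σ(H)‖_* ≤ ‖H‖_*`. Since `p = 2/L ≤ 1`, `‖H‖_{S_p}^p ≥ ‖H‖_*^p ≥ ‖σ(H)‖_*^p`, and the
trace and determinant conditions force `‖σ(H)‖_* = s₁ + s₂`. A rank-one `H` attains the bound,
as its two Schatten quantities coincide.
-/

section GramDet

variable {ι : Type*} [Fintype ι]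

def gramDet (u v : ι → ℝ) : ℝ := (u ⬝ᵥ u) * (v ⬝ᵥ v) - (u ⬝ᵥ v) ^ 2

/-- The coordinates of `u ∧ v`, indexed by pairs of indices. -/
def wedge (u v : ι → ℝ) : ι × ι → ℝ := fun p => u p.1 * v p.2 - u p.2 * v p.1

lemma wedge_dotProduct_wedge (a b c e : ι → ℝ) :
    wedge a b ⬝ᵥ wedge c e = 2 * ((a ⬝ᵥ c) * (b ⬝ᵥ e) - (a ⬝ᵥ e) * (b ⬝ᵥ c)) := by
  have h : ∀ i j : ι, (a i * b j - a j * b i) * (c i * e j - c j * e i) =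
      (a i * c i) * (b j * e j) + (a j * c j) * (b i * e i)
        - ((a i * e i) * (b j * c j) + (a j * e j) * (b i * c i)) := fun i j => by ring
  simp only [dotProduct, wedge, Fintype.sum_prod_type, h, Finset.sum_sub_distrib,
    Finset.sum_add_distrib, ← Finset.sum_mul, ← Finset.mul_sum]
  ring

lemma wedge_dotProduct_self (u v : ι → ℝ) : wedge u v ⬝ᵥ wedge u v = 2 * gramDet u v := by
  rw [wedge_dotProduct_wedge, gramDet, dotProduct_comm v u, sq]

lemma gramDet_nonneg (u v : ι → ℝ) : 0 ≤ gramDet u v := by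
  have := dotProduct_self_star_nonneg (wedge u v)
  rw [star_trivial, wedge_dotProduct_self] at this
  linarith

lemma gramDet_le (u v : ι → ℝ) : gramDet u v ≤ (u ⬝ᵥ u) * (v ⬝ᵥ v) := by
  unfold gramDet; linarith [sq_nonneg (u ⬝ᵥ v)]

lemma two_mul_sqrt_gramDet_le (u v : ι → ℝ) : 2 * √(gramDet u v) ≤ u ⬝ᵥ u + v ⬝ᵥ v := by
  have hu := dotProduct_self_star_nonneg u
  have hv := dotProduct_self_star_nonneg v
  rw [star_trivial] at hu hv
  rw [← le_div_iff₀' two_pos, Real.sqrt_le_left (by positivity)]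
  nlinarith [gramDet_le u v, sq_nonneg (u ⬝ᵥ u - v ⬝ᵥ v)]

lemma gramDet_smul_smul (c c' : ℝ) (w : ι → ℝ) : gramDet (c • w) (c' • w) = 0 := by
  simp only [gramDet, smul_dotProduct, dotProduct_smul, smul_eq_mul]
  ring

/-- Cauchy–Schwarz for the induced inner product on `Λ²ℝ^ι`. -/
lemma dotProduct_mul_dotProduct_sub_le (a b c e : ι → ℝ) :
    (a ⬝ᵥ c) * (b ⬝ᵥ e) - (a ⬝ᵥ e) * (b ⬝ᵥ c) ≤ √(gramDet a b) * √(gramDet c e) := by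
  have hcs : (wedge a b ⬝ᵥ wedge c e) ^ 2 ≤
      (wedge a b ⬝ᵥ wedge a b) * (wedge c e ⬝ᵥ wedge c e) := by
    simpa only [dotProduct, ← sq] using
      Finset.sum_mul_sq_le_sq_mul_sq Finset.univ (wedge a b) (wedge c e)
  rw [wedge_dotProduct_wedge, wedge_dotProduct_self, wedge_dotProduct_self] at hcs
  rw [← Real.sqrt_mul (gramDet_nonneg a b)]
  refine Real.le_sqrt_of_sq_le ?_
  nlinarith

end GramDet

section PosPart

variable {ι : Type*} [Fintype ι]

lemma posPart_mul_negPart (a : ℝ) : a⁺ * a⁻ = 0 := by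
  rcases le_total 0 a with h | h
  · rw [negPart_eq_zero.mpr h, mul_zero]
  · rw [posPart_eq_zero.mpr h, zero_mul]

lemma posPart_dotProduct_negPart (u : ι → ℝ) : u⁺ ⬝ᵥ u⁻ = 0 :=
  Finset.sum_eq_zero fun i _ => posPart_mul_negPart (u i)

lemma dotProduct_eq_posPart_sub_negPart (u w : ι → ℝ) : u ⬝ᵥ w = u⁺ ⬝ᵥ w - u⁻ ⬝ᵥ w := by
  rw [← sub_dotProduct, posPart_sub_negPart]

lemma dotProduct_posPart_self (u : ι → ℝ) : u ⬝ᵥ u⁺ = u⁺ ⬝ᵥ u⁺ := by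
  rw [dotProduct_eq_posPart_sub_negPart, dotProduct_comm u⁻, posPart_dotProduct_negPart, sub_zero]

lemma dotProduct_self_eq_posPart_add_negPart (u : ι → ℝ) :
    u ⬝ᵥ u = u⁺ ⬝ᵥ u⁺ + u⁻ ⬝ᵥ u⁻ := by
  conv_lhs => rw [← posPart_sub_negPart u]
  rw [sub_dotProduct, dotProduct_sub, dotProduct_sub, dotProduct_comm u⁻ u⁺,
    posPart_dotProduct_negPart]
  ring

/-- Pair `u ∧ v` with `u⁺ ∧ v⁺`: after expanding `u = u⁺ - u⁻`, `v = v⁺ - v⁻`, every cross term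
is nonnegative except `⟨u⁺ ∧ v⁺, v⁻ ∧ u⁻⟩`, which Cauchy–Schwarz bounds by
`√(gramDet u⁺ v⁺) * √(gramDet v⁻ u⁻)`. -/
lemma two_mul_sqrt_gramDet_posPart_le (u v : ι → ℝ) :
    2 * √(gramDet u⁺ v⁺) ≤ 2 * √(gramDet u v) + (u⁻ ⬝ᵥ u⁻ + v⁻ ⬝ᵥ v⁻) := by
  set g := √(gramDet u⁺ v⁺)
  set h := √(gramDet u v)
  set k := √(gramDet v⁻ u⁻)
  have hg : g ^ 2 = gramDet u⁺ v⁺ := Real.sq_sqrt (gramDet_nonneg _ _)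
  have hC : 0 ≤ u⁺ ⬝ᵥ v⁺ := dotProduct_nonneg_of_nonneg (posPart_nonneg u) (posPart_nonneg v)
  have hβ : 0 ≤ v⁻ ⬝ᵥ u⁺ := dotProduct_nonneg_of_nonneg (negPart_nonneg v) (posPart_nonneg u)
  have hγ : 0 ≤ u⁻ ⬝ᵥ v⁺ := dotProduct_nonneg_of_nonneg (negPart_nonneg u) (posPart_nonneg v)
  have hpair : (u⁺ ⬝ᵥ u⁺) * (v⁺ ⬝ᵥ v⁺)
      - (u⁺ ⬝ᵥ v⁺ - u⁻ ⬝ᵥ v⁺) * (u⁺ ⬝ᵥ v⁺ - v⁻ ⬝ᵥ u⁺) ≤ h * g := by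
    have := dotProduct_mul_dotProduct_sub_le u v u⁺ v⁺
    rwa [dotProduct_posPart_self, dotProduct_posPart_self, dotProduct_eq_posPart_sub_negPart u,
      dotProduct_eq_posPart_sub_negPart v, dotProduct_comm v⁺ u⁺] at this
  have hmixed : (v⁻ ⬝ᵥ u⁺) * (u⁻ ⬝ᵥ v⁺) ≤ g * k := by
    have := dotProduct_mul_dotProduct_sub_le u⁺ v⁺ v⁻ u⁻
    rwa [posPart_dotProduct_negPart, zero_mul, sub_zero, dotProduct_comm u⁺,
      dotProduct_comm v⁺] at this
  have hcross : g ^ 2 - g * k ≤ h * g := by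
    rw [hg, gramDet]
    nlinarith [mul_nonneg hC (add_nonneg hβ hγ)]
  have hk : 2 * k ≤ u⁻ ⬝ᵥ u⁻ + v⁻ ⬝ᵥ v⁻ := by
    linarith [two_mul_sqrt_gramDet_le v⁻ u⁻]
  rcases (Real.sqrt_nonneg _ : 0 ≤ g).eq_or_lt with hg0 | hgpos
  · have hg0 : g = 0 := hg0.symm
    have hh : 0 ≤ h := Real.sqrt_nonneg _
    have hk0 : 0 ≤ k := Real.sqrt_nonneg _
    rw [hg0]; linarith
  · have : g - k ≤ h := le_of_mul_le_mul_left (by nlinarith) hgpos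
    linarith

end PosPart

section TwoColumns

variable {m : ℕ}

lemma trace_transpose_mul_self_fin_two (A : Matrix (Fin m) (Fin 2) ℝ) :
    (Aᵀ * A).trace = Aᵀ 0 ⬝ᵥ Aᵀ 0 + Aᵀ 1 ⬝ᵥ Aᵀ 1 := by
  simp only [trace_fin_two, mul_apply']
  rfl

lemma det_transpose_mul_self_fin_two (A : Matrix (Fin m) (Fin 2) ℝ) :
    (Aᵀ * A).det = gramDet (Aᵀ 0) (Aᵀ 1) := by
  rw [det_fin_two, gramDet, sq]
  change (Aᵀ 0 ⬝ᵥ Aᵀ 0) * (Aᵀ 1 ⬝ᵥ Aᵀ 1) - (Aᵀ 0 ⬝ᵥ Aᵀ 1) * (Aᵀ 1 ⬝ᵥ Aᵀ 0) = _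
  rw [dotProduct_comm (Aᵀ 1) (Aᵀ 0)]

lemma singVals_nonneg {n : ℕ} (A : Matrix (Fin m) (Fin n) ℝ) (i : Fin n) : 0 ≤ singVals A i :=
  Real.sqrt_nonneg _

lemma singVals_sq_add_sq (A : Matrix (Fin m) (Fin 2) ℝ) :
    singVals A 0 ^ 2 + singVals A 1 ^ 2 = (Aᵀ * A).trace := by
  have hA := posSemidef_conjTranspose_mul_self A
  rw [singVals, singVals, Real.sq_sqrt (hA.eigenvalues_nonneg 0),
    Real.sq_sqrt (hA.eigenvalues_nonneg 1), ← conjTranspose_eq_transpose_of_trivial,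
    hA.isHermitian.trace_eq_sum_eigenvalues, Fin.sum_univ_two]
  rfl

lemma singVals_mul (A : Matrix (Fin m) (Fin 2) ℝ) :
    singVals A 0 * singVals A 1 = √(Aᵀ * A).det := by
  have hA := posSemidef_conjTranspose_mul_self A
  rw [singVals, singVals, ← Real.sqrt_mul (hA.eigenvalues_nonneg 0),
    ← conjTranspose_eq_transpose_of_trivial, hA.isHermitian.det_eq_prod_eigenvalues,
    Fin.prod_univ_two]
  rfl

lemma nuclearNorm_eq_sqrt (A : Matrix (Fin m) (Fin 2) ℝ) :
    nuclearNorm A = √((Aᵀ * A).trace + 2 * √(Aᵀ * A).det) := by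
  rw [← singVals_sq_add_sq, ← singVals_mul, ← mul_assoc, ← add_sq', nuclearNorm,
    Fin.sum_univ_two, Real.sqrt_sq (add_nonneg (singVals_nonneg A 0) (singVals_nonneg A 1))]

lemma nuclearNorm_rpow_le_schattenPow (A : Matrix (Fin m) (Fin 2) ℝ) {p : ℝ} (hp0 : 0 ≤ p)
    (hp1 : p ≤ 1) : nuclearNorm A ^ p ≤ schattenPow p A := by
  rw [nuclearNorm, schattenPow, Fin.sum_univ_two, Fin.sum_univ_two]
  exact Real.rpow_add_le_add_rpow (singVals_nonneg A 0) (singVals_nonneg A 1) hp0 hp1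

lemma schattenPow_eq_nuclearNorm_rpow (A : Matrix (Fin m) (Fin 2) ℝ) {p : ℝ} (hp : 0 < p)
    (hA : (Aᵀ * A).det = 0) : schattenPow p A = nuclearNorm A ^ p := by
  have hsing : singVals A 0 * singVals A 1 = 0 := by rw [singVals_mul, hA, Real.sqrt_zero]
  rw [nuclearNorm, schattenPow, Fin.sum_univ_two, Fin.sum_univ_two]
  rcases mul_eq_zero.mp hsing with h | h <;>
    simp [h, Real.zero_rpow hp.ne']

lemma transpose_map_relu (A : Matrix (Fin m) (Fin 2) ℝ) (j : Fin 2) :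
    (A.map relu)ᵀ j = (Aᵀ j)⁺ :=
  rfl

theorem nuclearNorm_map_relu_le (A : Matrix (Fin m) (Fin 2) ℝ) :
    nuclearNorm (A.map relu) ≤ nuclearNorm A := by
  rw [nuclearNorm_eq_sqrt, nuclearNorm_eq_sqrt, trace_transpose_mul_self_fin_two,
    trace_transpose_mul_self_fin_two, det_transpose_mul_self_fin_two,
    det_transpose_mul_self_fin_two, transpose_map_relu, transpose_map_relu,
    dotProduct_self_eq_posPart_add_negPart (Aᵀ 0), dotProduct_self_eq_posPart_add_negPart (Aᵀ 1)]
  refine Real.sqrt_le_sqrt ?_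
  linarith [two_mul_sqrt_gramDet_posPart_le (Aᵀ 0) (Aᵀ 1)]

end TwoColumns

lemma posPart_smul_single_sub_single {ι : Type*} [DecidableEq ι] {a b : ι} (hab : a ≠ b)
    {c x y : ℝ} (hc : 0 ≤ c) (hx : 0 ≤ x) (hy : 0 ≤ y) :
    (c • (Pi.single a x - Pi.single b y) : ι → ℝ)⁺ = Pi.single a (c * x) := by
  funext i
  by_cases ha : i = a
  · subst ha
    simp [hab, mul_nonneg hc hx]
  · by_cases hb : i = b
    · subst hb
      simp [ha, mul_nonneg hc hy]
    · simp [ha, hb]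

/-- The rank-one `H = w (√s₁, -√s₂)` with `w = (√s₁, -√s₂, 0, …)` has ReLU image `diag(s₁, s₂)`. -/
lemma exists_rank_one_map_relu {d : ℕ} (hd : 2 ≤ d) {s1 s2 : ℝ} (hs1 : 0 ≤ s1) (hs2 : 0 ≤ s2) :
    ∃ H : Matrix (Fin d) (Fin 2) ℝ,
      ((H.map relu)ᵀ * H.map relu).trace = s1 ^ 2 + s2 ^ 2 ∧
      ((H.map relu)ᵀ * H.map relu).det = s1 ^ 2 * s2 ^ 2 ∧
      (Hᵀ * H).trace = (s1 + s2) ^ 2 ∧ (Hᵀ * H).det = 0 := by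
  let a : Fin d := ⟨0, by omega⟩
  let b : Fin d := ⟨1, by omega⟩
  have hab : a ≠ b := by simp [a, b, Fin.ext_iff]
  let w : Fin d → ℝ := Pi.single a √s1 - Pi.single b √s2
  let H : Matrix (Fin d) (Fin 2) ℝ := (of ![√s1 • w, -√s2 • w])ᵀ
  have hH0 : Hᵀ 0 = √s1 • w := rfl
  have hH1 : Hᵀ 1 = -√s2 • w := rfl
  have hu : (Hᵀ 0)⁺ = Pi.single a s1 := by
    rw [hH0, posPart_smul_single_sub_single hab (Real.sqrt_nonneg s1) (Real.sqrt_nonneg s1)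
      (Real.sqrt_nonneg s2), Real.mul_self_sqrt hs1]
  have hv : (Hᵀ 1)⁺ = Pi.single b s2 := by
    rw [hH1, neg_smul, ← smul_neg, neg_sub, posPart_smul_single_sub_single hab.symm
      (Real.sqrt_nonneg s2) (Real.sqrt_nonneg s2) (Real.sqrt_nonneg s1), Real.mul_self_sqrt hs2]
  refine ⟨H, ?_, ?_, ?_, ?_⟩
  · rw [trace_transpose_mul_self_fin_two, transpose_map_relu, transpose_map_relu, hu, hv]
    simp [sq]
  · rw [det_transpose_mul_self_fin_two, transpose_map_relu, transpose_map_relu, hu, hv, gramDet]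
    simp [hab, sq]
  · have hw : w ⬝ᵥ w = s1 + s2 := by simp [w, hab, hab.symm, hs1, hs2]
    rw [trace_transpose_mul_self_fin_two, hH0, hH1]
    simp only [smul_dotProduct, dotProduct_smul, smul_eq_mul, hw]
    linear_combination (s1 + s2) * (Real.mul_self_sqrt hs1 + Real.mul_self_sqrt hs2)
  · rw [det_transpose_mul_self_fin_two, hH0, hH1]
    exact gramDet_smul_smul _ _ w

theorem stmt_9 {d : ℕ} (hd : 2 ≤ d) (L : ℕ) (hL : 2 ≤ L)
    (s1 s2 : ℝ) (hs12 : s2 ≤ s1) (hs2 : 0 ≤ s2) :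
    IsLeast {v : ℝ | ∃ H : Matrix (Fin d) (Fin 2) ℝ,
        Matrix.trace ((H.map relu)ᵀ * (H.map relu)) = s1 ^ 2 + s2 ^ 2 ∧
        Matrix.det ((H.map relu)ᵀ * (H.map relu)) = s1 ^ 2 * s2 ^ 2 ∧
        v = schattenPow ((2 : ℝ) / L) H}
      ((s1 + s2) ^ ((2 : ℝ) / L)) := by
  have hs1 : 0 ≤ s1 := hs2.trans hs12
  have hL0 : (0 : ℝ) < L := by exact_mod_cast (by omega : 0 < L)
  have hp0 : 0 < (2 : ℝ) / L := by positivity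
  have hp1 : (2 : ℝ) / L ≤ 1 := by rw [div_le_one hL0]; exact_mod_cast hL
  constructor
  · obtain ⟨H, htr, hdet, hHtr, hHdet⟩ := exists_rank_one_map_relu hd hs1 hs2
    refine ⟨H, htr, hdet, ?_⟩
    rw [schattenPow_eq_nuclearNorm_rpow H hp0 hHdet, nuclearNorm_eq_sqrt, hHtr, hHdet,
      Real.sqrt_zero, mul_zero, add_zero, Real.sqrt_sq (by positivity)]
  · rintro _ ⟨H, htr, hdet, rfl⟩
    have hrelu : nuclearNorm (H.map relu) = s1 + s2 := by
      rw [nuclearNorm_eq_sqrt, htr, hdet, ← mul_pow, Real.sqrt_sq (by positivity), ← mul_assoc,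
        ← add_sq', Real.sqrt_sq (by positivity)]
    calc (s1 + s2) ^ ((2 : ℝ) / L) = nuclearNorm (H.map relu) ^ ((2 : ℝ) / L) := by rw [hrelu]
      _ ≤ nuclearNorm H ^ ((2 : ℝ) / L) :=
        Real.rpow_le_rpow (hrelu ▸ by positivity) (nuclearNorm_map_relu_le H) hp0.le
      _ ≤ schattenPow ((2 : ℝ) / L) H := nuclearNorm_rpow_le_schattenPow H hp0.le hp1
end

section
/- The $3\times 3$ matrix $A = \begin{pmatrix} -1 & 0 & 1 \\ 0 & 1 & 1 \\ 1 & 1 & 0 \end{pmatrix}$ satisfies $\|\sigma(A)\|_* > \|A\|_*$, where $\sigma$ is the entrywise ReLU and $\|\cdot\|_*$ the nuclear norm. In particular, the inequality $\|\sigma(M)\|_* \le \|M\|_*$ fails for general square matrices $M$. -/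
open Matrix BigOperators

/-!
The singular values `sᵢ` of a matrix with three columns are the square roots of the eigenvalues
of `AᴴA`, whose elementary symmetric functions `e₁, e₂, e₃` are read off its characteristic
polynomial. Hence `p = ∑ sᵢ` and `q = ∑_{i<j} sᵢ sⱼ` satisfy `p² = e₁ + 2q` and
`q² = e₂ + 2√e₃ p`, so `(p² - e₁)² = 4 (e₂ + 2√e₃ p)` with `p² ≥ e₁`.
For `A`, `(e₁, e₂, e₃) = (6, 9, 0)` gives `‖A‖_*² = 12`; for `σ(A)`, `(5, 6, 1)` gives
`(p² - 5)² = 8p + 24`, which has no solution with `5 ≤ p² ≤ 12`.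
-/

open Polynomial

lemma Matrix.IsHermitian.eval_charpoly_eq_prod {n : Type*} [Fintype n] [DecidableEq n]
    {M : Matrix n n ℝ} (hM : M.IsHermitian) (t : ℝ) :
    M.charpoly.eval t = ∏ i, (t - hM.eigenvalues i) := by
  simp [hM.charpoly_eq, eval_prod]

lemma vieta_fin_three {l : Fin 3 → ℝ} {a b c : ℝ}
    (h : ∀ t, ∏ i, (t - l i) = t ^ 3 - a * t ^ 2 + b * t - c) :
    l 0 + l 1 + l 2 = a ∧ l 0 * l 1 + l 0 * l 2 + l 1 * l 2 = b ∧ l 0 * l 1 * l 2 = c := by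
  have h₀ := h 0
  have h₁ := h 1
  have h₂ := h (-1)
  simp only [Fin.prod_univ_three] at h₀ h₁ h₂
  refine ⟨?_, ?_, ?_⟩
  · linear_combination (-1 / 2 : ℝ) * (h₁ + h₂) + h₀
  · linear_combination (1 / 2 : ℝ) * (h₁ - h₂)
  · linear_combination -h₀

lemma nuclearNorm_nonneg {m n : ℕ} (A : Matrix (Fin m) (Fin n) ℝ) : 0 ≤ nuclearNorm A :=
  Finset.sum_nonneg fun _ _ => Real.sqrt_nonneg _

lemma quartic_of_prod_sub_sq_fin_three {s : Fin 3 → ℝ} (hs : ∀ i, 0 ≤ s i) {a b c : ℝ}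
    (h : ∀ t, ∏ i, (t - s i ^ 2) = t ^ 3 - a * t ^ 2 + b * t - c) :
    a ≤ (∑ i, s i) ^ 2 ∧ ((∑ i, s i) ^ 2 - a) ^ 2 = 4 * (b + 2 * √c * ∑ i, s i) := by
  obtain ⟨rfl, rfl, rfl⟩ := vieta_fin_three h
  have hsc : √(s 0 ^ 2 * s 1 ^ 2 * s 2 ^ 2) = s 0 * s 1 * s 2 := by
    rw [← mul_pow, ← mul_pow, Real.sqrt_sq (mul_nonneg (mul_nonneg (hs 0) (hs 1)) (hs 2))]
  rw [hsc, Fin.sum_univ_three]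
  constructor
  · nlinarith [mul_nonneg (hs 0) (hs 1), mul_nonneg (hs 0) (hs 2), mul_nonneg (hs 1) (hs 2)]
  · ring

lemma sq_singVals {m n : ℕ} (A : Matrix (Fin m) (Fin n) ℝ) (i : Fin n) :
    singVals A i ^ 2 = (posSemidef_conjTranspose_mul_self A).isHermitian.eigenvalues i :=
  Real.sq_sqrt ((posSemidef_conjTranspose_mul_self A).eigenvalues_nonneg i)

lemma nuclearNorm_fin_three_quartic {m : ℕ} (A : Matrix (Fin m) (Fin 3) ℝ) {a b c : ℝ}
    (h : ∀ t, (Aᴴ * A).charpoly.eval t = t ^ 3 - a * t ^ 2 + b * t - c) :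
    a ≤ nuclearNorm A ^ 2 ∧
      (nuclearNorm A ^ 2 - a) ^ 2 = 4 * (b + 2 * √c * nuclearNorm A) := by
  refine quartic_of_prod_sub_sq_fin_three (s := singVals A) (fun _ => Real.sqrt_nonneg _)
    fun t => ?_
  simp only [sq_singVals, ← h,
    (posSemidef_conjTranspose_mul_self A).isHermitian.eval_charpoly_eq_prod]

lemma sq_nuclearNorm_eq_twelve :
    nuclearNorm (!![-1, 0, 1; 0, 1, 1; 1, 1, 0] : Matrix (Fin 3) (Fin 3) ℝ) ^ 2 = 12 := by
  obtain ⟨h₆, hquartic⟩ :=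
    nuclearNorm_fin_three_quartic !![-1, 0, 1; 0, 1, 1; 1, 1, 0] (a := 6) (b := 9) (c := 0)
      fun t => by
        rw [eval_charpoly, det_fin_three]
        simp [Matrix.mul_apply, Fin.sum_univ_three]
        ring
  rw [Real.sqrt_zero, mul_zero, zero_mul, add_zero] at hquartic
  nlinarith

lemma twelve_lt_sq_nuclearNorm :
    12 < nuclearNorm (!![0, 0, 1; 0, 1, 1; 1, 1, 0] : Matrix (Fin 3) (Fin 3) ℝ) ^ 2 := by
  obtain ⟨h₅, hquartic⟩ :=
    nuclearNorm_fin_three_quartic !![0, 0, 1; 0, 1, 1; 1, 1, 0] (a := 5) (b := 6) (c := 1)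
      fun t => by
        rw [eval_charpoly, det_fin_three]
        simp [Matrix.mul_apply, Fin.sum_univ_three]
        ring
  rw [Real.sqrt_one] at hquartic
  by_contra! h₁₂
  nlinarith [nuclearNorm_nonneg (!![0, 0, 1; 0, 1, 1; 1, 1, 0] : Matrix (Fin 3) (Fin 3) ℝ),
    mul_nonneg (sub_nonneg.2 h₅) (sub_nonneg.2 h₁₂)]

lemma map_relu_eq : (!![-1, 0, 1; 0, 1, 1; 1, 1, 0] : Matrix (Fin 3) (Fin 3) ℝ).map relu =
    !![0, 0, 1; 0, 1, 1; 1, 1, 0] := by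
  ext i j
  fin_cases i <;> fin_cases j <;> norm_num [relu]

theorem stmt_11 :
    (letI A : Matrix (Fin 3) (Fin 3) ℝ := !![-1, 0, 1; 0, 1, 1; 1, 1, 0]
     nuclearNorm (A.map relu) > nuclearNorm A) ∧
    ¬ ∀ M : Matrix (Fin 3) (Fin 3) ℝ, nuclearNorm (M.map relu) ≤ nuclearNorm M := by
  have hA : nuclearNorm (!![-1, 0, 1; 0, 1, 1; 1, 1, 0] : Matrix (Fin 3) (Fin 3) ℝ) <
      nuclearNorm ((!![-1, 0, 1; 0, 1, 1; 1, 1, 0] : Matrix (Fin 3) (Fin 3) ℝ).map relu) := by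
    rw [map_relu_eq]
    refine lt_of_pow_lt_pow_left₀ 2 (nuclearNorm_nonneg _) ?_
    rw [sq_nuclearNorm_eq_twelve]
    exact twelve_lt_sq_nuclearNorm
  exact ⟨hA, fun h => (h _).not_gt hA⟩
end
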